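/- Linear independence of interpolated eigenvectors (Lemma 3.4(a), abstract form): Assume conditions (A) and (C) hold with constants α ≥ 0 and β ≥ 0, and assume β·λ(j) < 1. Then the interpolations I_h u(1), …, I_h u(j) of the exact eigenvectors are linearly independent in V_h. -/
import Mathlib


/-- Linear independence of interpolated eigenvectors (Lemma 3.4(a), abstract form):
Assume conditions (A) and (C) hold with constants `α ≥ 0` and `β ≥ 0`, and assume
`β·λ(j) < 1`. Then the interpolations `I_h u(1), …, I_h u(j)` of the exact eigenvectors
are linearly independent in `V_h`. -/
theorem interpolated_eigenvectors_linearIndependent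
    {V : Type*} [AddCommGroup V] [Module ℝ V]
    {Vh : Type*} [AddCommGroup Vh] [Module ℝ Vh] [FiniteDimensional ℝ Vh]
    (a b : V →ₗ[ℝ] V →ₗ[ℝ] ℝ)
    (ha_symm : ∀ x y, a x y = a y x) (hb_symm : ∀ x y, b x y = b y x)
    (ah bh : Vh →ₗ[ℝ] Vh →ₗ[ℝ] ℝ)
    (hah_symm : ∀ x y, ah x y = ah y x) (hbh_symm : ∀ x y, bh x y = bh y x)
    (hah_pos : ∀ x, 0 ≤ ah x x) (hbh_pos : ∀ x, 0 ≤ bh x x)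
    (Ih : V →ₗ[ℝ] Vh)
    (D : V → ℝ) (hD : ∀ v, 0 ≤ D v)
    (j : ℕ) (hj : 1 ≤ j)
    (u : Fin j → V) (lam : Fin j → ℝ) (hlam : Monotone lam)
    (hnorm : ∀ i, b (u i) (u i) = 1)
    (heig : ∀ i, a (u i) (u i) = lam i)
    (horth_a : ∀ i k, i ≠ k → a (u i) (u k) = 0)
    (horth_b : ∀ i k, i ≠ k → b (u i) (u k) = 0)
    (α β : ℝ) (hα : 0 ≤ α) (hβ : 0 ≤ β)
    (hA : ∀ v ∈ Submodule.span ℝ (Set.range u),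
      ah (Ih v) (Ih v) ≤ a v v - (D v) ^ 2)
    (hC : ∀ v ∈ Submodule.span ℝ (Set.range u),
      b v v - β * (D v) ^ 2 ≤ bh (Ih v) (Ih v))
    (h_beta_lam : β * lam ⟨j - 1, by omega⟩ < 1) :
    LinearIndependent ℝ (fun i => Ih (u i)) := by
  rw [Fintype.linearIndependent_iff]
  intro c hc
  set v : V := ∑ i, c i • u i with hv
  have hvmem : v ∈ Submodule.span ℝ (Set.range u) :=
    Submodule.sum_mem _ (fun i _ => Submodule.smul_mem _ _ (Submodule.subset_span ⟨i, rfl⟩))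
  have hIv : Ih v = 0 := by
    rw [hv, map_sum]; simpa using hc
  have hbvv : b v v = ∑ i, (c i) ^ 2 := by
    rw [hv]
    simp only [map_sum, map_smul, LinearMap.sum_apply, LinearMap.smul_apply, smul_eq_mul]
    refine Finset.sum_congr rfl (fun i _ => ?_)
    rw [Finset.sum_eq_single i]
    · rw [hnorm i]; ring
    · intro k _ hk
      simp [horth_b k i hk]
    · intro h; exact absurd (Finset.mem_univ i) h
  have havv : a v v = ∑ i, (c i) ^ 2 * lam i := by
    rw [hv]
    simp only [map_sum, map_smul, LinearMap.sum_apply, LinearMap.smul_apply, smul_eq_mul]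
    refine Finset.sum_congr rfl (fun i _ => ?_)
    rw [Finset.sum_eq_single i]
    · rw [heig i]; ring
    · intro k _ hk
      simp [horth_a k i hk]
    · intro h; exact absurd (Finset.mem_univ i) h
  have hD2a : (D v) ^ 2 ≤ a v v := by
    have := hA v hvmem
    have := hah_pos (Ih v)
    linarith
  have hbD : b v v ≤ β * (D v) ^ 2 := by
    have := hC v hvmem
    rw [hIv] at this
    simp at this
    linarith
  set M := lam ⟨j - 1, by omega⟩ with hM
  have hlamle : ∀ i : Fin j, lam i ≤ M := by
    intro i
    exact hlam (by simpa [Fin.le_def] using Nat.le_sub_one_of_lt i.isLt)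
  have hchain : ∑ i, (c i) ^ 2 ≤ β * M * ∑ i, (c i) ^ 2 := by
    have h1 : b v v ≤ β * a v v := le_trans hbD (by nlinarith)
    rw [hbvv, havv] at h1
    have h2 : β * ∑ i, (c i) ^ 2 * lam i ≤ β * M * ∑ i, (c i) ^ 2 := by
      rw [Finset.mul_sum, Finset.mul_sum]
      refine Finset.sum_le_sum (fun i _ => ?_)
      have := hlamle i
      nlinarith [mul_nonneg hβ (sq_nonneg (c i)), sq_nonneg (c i)]
    linarith
  have hSnn : 0 ≤ ∑ i, (c i) ^ 2 := Finset.sum_nonneg (fun i _ => sq_nonneg _)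
  have hS0 : ∑ i, (c i) ^ 2 = 0 := by nlinarith
  intro i
  have := (Finset.sum_eq_zero_iff_of_nonneg (fun i _ => sq_nonneg (c i))).mp hS0 i (Finset.mem_univ i)
  exact pow_eq_zero_iff (n := 2) (by norm_num) |>.mp this
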